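/- arXiv:2501.07023 — 3 statements merged into one kernel-verified Lean document; each statement's English description precedes it below -/
import Mathlib

section
/- Let T be a tree of sequences and ξ an inductive probability measure on T. Then there exists a probability tree p on T such that Ξ_p(t) = ξ(t) for all t ∈ T. -/
open scoped ENNReal
open MeasureTheory

noncomputable section

/-- A tree of sequences: a nonempty set of finite lists of naturals closed under prefixes. -/
def IsTree (T : Set (List ℕ)) : Prop :=
  T.Nonempty ∧ ∀ s t : List ℕ, s <+: t → t ∈ T → s ∈ T

/-- `t` is a maximal node of `T`: it has no successor in `T`. -/
def IsMaxNode (T : Set (List ℕ)) (t : List ℕ) : Prop :=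
  ∀ k : ℕ, t ++ [k] ∉ T

/-- A probability tree on `T`. -/
def IsProbTree (T : Set (List ℕ)) (p : List ℕ → ℕ → ℝ≥0∞) : Prop :=
  ∀ t ∈ T, ¬ IsMaxNode T t →
    (∀ k : ℕ, t ++ [k] ∉ T → p t k = 0) ∧ (∑' k : ℕ, p t k = 1)

/-- The measure induced by a probability tree: `Ξ_p(t) = ∏_{i<|t|} p (t↾i) (t i)`. -/
def Xi (p : List ℕ → ℕ → ℝ≥0∞) (t : List ℕ) : ℝ≥0∞ :=
  ∏ i ∈ Finset.range t.length, p (t.take i) (t.getD i 0)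

/-- An inductive probability measure on `T`. -/
def IsIPM (T : Set (List ℕ)) (ξ : List ℕ → ℝ≥0∞) : Prop :=
  ξ [] = 1 ∧ ∀ t ∈ T, ¬ IsMaxNode T t →
    ξ t = ∑' k : {k : ℕ // t ++ [k] ∈ T}, ξ (t ++ [k.1])

/-- The set of infinite branches of `T`. -/
def limT (T : Set (List ℕ)) : Set (ℕ → ℕ) :=
  {x | ∀ n : ℕ, (List.range n).map x ∈ T}

/-- `T` is pruned: every node has a successor in `T`. -/
def Pruned (T : Set (List ℕ)) : Prop := ∀ t ∈ T, ∃ k : ℕ, t ++ [k] ∈ T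

/-- The basic clopen set `[t]` of branches through `t`. -/
def cyl (T : Set (List ℕ)) (t : List ℕ) : Set ↥(limT T) :=
  {x | (List.range t.length).map x.1 = t}


theorem Xi_append_singleton (p : List ℕ → ℕ → ℝ≥0∞) (t : List ℕ) (k : ℕ) :
    Xi p (t ++ [k]) = Xi p t * p t k := by
  rw [Xi, Xi, List.length_append, List.length_singleton, Finset.prod_range_succ]
  congr 1
  · refine Finset.prod_congr rfl fun i hi => ?_
    rw [Finset.mem_range] at hi
    rw [List.take_append_of_le_length hi.le, List.getD_append _ _ _ _ hi]
  · simp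

theorem IsTree.mem_of_append_singleton_mem {T : Set (List ℕ)} (hT : IsTree T) {t : List ℕ}
    {k : ℕ} (hk : t ++ [k] ∈ T) : t ∈ T :=
  hT.2 t (t ++ [k]) (List.prefix_append _ _) hk

namespace IsIPM

variable {T : Set (List ℕ)} {ξ : List ℕ → ℝ≥0∞}

theorem apply_append_singleton_le (hξ : IsIPM T ξ) {t : List ℕ} (ht : t ∈ T) {k : ℕ}
    (hk : t ++ [k] ∈ T) : ξ (t ++ [k]) ≤ ξ t := by
  rw [hξ.2 t ht fun h => h k hk]
  exact ENNReal.le_tsum (⟨k, hk⟩ : {k : ℕ // t ++ [k] ∈ T})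

theorem le_one (hT : IsTree T) (hξ : IsIPM T ξ) {t : List ℕ} (ht : t ∈ T) : ξ t ≤ 1 := by
  induction t using List.reverseRecOn with
  | nil => exact hξ.1.le
  | append_singleton t k ih =>
    have ht' := hT.mem_of_append_singleton_mem ht
    exact (hξ.apply_append_singleton_le ht' ht).trans (ih ht')

theorem ne_top (hT : IsTree T) (hξ : IsIPM T ξ) {t : List ℕ} (ht : t ∈ T) : ξ t ≠ ∞ :=
  ne_top_of_le_ne_top ENNReal.one_ne_top (hξ.le_one hT ht)

end IsIPM

/-- At a node of measure zero any distribution on the successors will do; all mass goes to one. -/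
def condProb (T : Set (List ℕ)) (ξ : List ℕ → ℝ≥0∞) (t : List ℕ) (k : ℕ) : ℝ≥0∞ :=
  if ξ t = 0 then (if k = Classical.epsilon fun j => t ++ [j] ∈ T then 1 else 0)
  else {j | t ++ [j] ∈ T}.indicator (fun j => ξ (t ++ [j]) / ξ t) k

section condProb

variable {T : Set (List ℕ)} {ξ : List ℕ → ℝ≥0∞}

theorem isProbTree_condProb (hT : IsTree T) (hξ : IsIPM T ξ) : IsProbTree T (condProb T ξ) := by
  intro t ht hmax
  have hsucc : ∃ j, t ++ [j] ∈ T := by simpa [IsMaxNode] using hmax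
  have hε : t ++ [Classical.epsilon fun j => t ++ [j] ∈ T] ∈ T := Classical.epsilon_spec hsucc
  by_cases h0 : ξ t = 0
  · refine ⟨fun k hk => ?_, ?_⟩
    · have : k ≠ Classical.epsilon fun j => t ++ [j] ∈ T := by rintro rfl; exact hk hε
      simp [condProb, h0, this]
    · simp only [condProb, h0, if_true]
      exact tsum_ite_eq _ 1
  · refine ⟨fun k hk => by simp [condProb, h0, hk], ?_⟩
    calc ∑' k, condProb T ξ t k
        = ∑' k : {j | t ++ [j] ∈ T}, ξ (t ++ [k.1]) / ξ t := by
          simp only [condProb, h0, if_false]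
          exact (tsum_subtype _ _).symm
      _ = (∑' k : {j | t ++ [j] ∈ T}, ξ (t ++ [k.1])) / ξ t := by
          simp only [div_eq_mul_inv, ENNReal.tsum_mul_right]
      _ = ξ t / ξ t := congrArg (· / ξ t) (hξ.2 t ht hmax).symm
      _ = 1 := ENNReal.div_self h0 (hξ.ne_top hT ht)

theorem mul_condProb (hT : IsTree T) (hξ : IsIPM T ξ) {t : List ℕ} {k : ℕ}
    (hk : t ++ [k] ∈ T) : ξ t * condProb T ξ t k = ξ (t ++ [k]) := by
  have ht := hT.mem_of_append_singleton_mem hk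
  by_cases h0 : ξ t = 0
  · have hle := hξ.apply_append_singleton_le ht hk
    rw [h0] at hle
    rw [h0, zero_mul, le_zero_iff.mp hle]
  · rw [condProb, if_neg h0, Set.indicator_of_mem (show k ∈ {j | t ++ [j] ∈ T} from hk)]
    exact ENNReal.mul_div_cancel h0 (hξ.ne_top hT ht)

theorem Xi_condProb (hT : IsTree T) (hξ : IsIPM T ξ) {t : List ℕ} (ht : t ∈ T) :
    Xi (condProb T ξ) t = ξ t := by
  induction t using List.reverseRecOn with
  | nil => simp [Xi, hξ.1]
  | append_singleton t k ih =>
    rw [Xi_append_singleton, ih (hT.mem_of_append_singleton_mem ht), mul_condProb hT hξ ht]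

end condProb

theorem stmt4 (T : Set (List ℕ)) (ξ : List ℕ → ℝ≥0∞)
    (hT : IsTree T) (hξ : IsIPM T ξ) :
    ∃ p : List ℕ → ℕ → ℝ≥0∞, IsProbTree T p ∧ ∀ t ∈ T, Xi p t = ξ t :=
  ⟨condProb T ξ, isProbTree_condProb hT hξ, fun _ ht => Xi_condProb hT hξ ht⟩
end
end

section
/- Let T be a pruned tree of sequences and ξ an inductive probability measure on T. Then there exists exactly one Borel probability measure λ on lim T such that λ([t]) = ξ(t) for every t ∈ T. -/
open scoped ENNReal
open MeasureTheory

noncomputable section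

/-!
Existence: extend `ξ` by zero outside `T` to `m`; the tree axioms make `m t = ∑' k, m (t ++ [k])`
for every `t`. Cut `[0, 1)` into consecutive half-open intervals of lengths `m [k]`, cut each of
them into intervals of lengths `m [k, l]`, and so on. Every `c ∈ [0, 1)` lies in exactly one
nested chain of these intervals, which spells out a branch `branch m c`, and the image of Lebesgue
measure under `c ↦ branch m c` gives the cylinder of `t` mass `m t`. In particular cylinders of
nodes outside `T` are null, so the measure lives on `lim T`.

Uniqueness: the cylinders form a π-system generating the σ-algebra of the Baire space.
-/

open Set

def baireCyl (t : List ℕ) : Set (ℕ → ℕ) := {x | (List.range t.length).map x = t}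

lemma mem_baireCyl_iff {x : ℕ → ℕ} {t : List ℕ} :
    x ∈ baireCyl t ↔ ∀ i (hi : i < t.length), x i = t[i] := by
  simp [baireCyl, List.ext_getElem_iff]

@[simp] lemma baireCyl_nil : baireCyl [] = univ := by
  simp [baireCyl]

lemma baireCyl_append_singleton (t : List ℕ) (k : ℕ) :
    baireCyl (t ++ [k]) = baireCyl t ∩ {x | x t.length = k} := by
  ext x
  simp [baireCyl, List.range_succ]

lemma measurableSet_baireCyl (t : List ℕ) : MeasurableSet (baireCyl t) := by
  induction t using List.reverseRecOn with
  | nil => simp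
  | append_singleton t k ih =>
    rw [baireCyl_append_singleton]
    exact ih.inter (measurableSet_eq_fun (measurable_pi_apply _) measurable_const)

lemma baireCyl_subset_of_prefix {s t : List ℕ} (h : s <+: t) : baireCyl t ⊆ baireCyl s := by
  intro x hx
  rw [mem_baireCyl_iff] at hx ⊢
  intro i hi
  rw [hx i (hi.trans_le h.length_le), h.getElem hi]

lemma isPiSystem_range_baireCyl : IsPiSystem (range baireCyl) := by
  rintro _ ⟨s, rfl⟩ _ ⟨t, rfl⟩ ⟨x, hs, ht⟩
  rw [mem_baireCyl_iff] at hs ht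
  wlog hst : s.length ≤ t.length generalizing s t
  · rw [inter_comm]
    exact this t s ht hs (le_of_not_ge hst)
  have hpre : s <+: t := by
    refine List.prefix_iff_eq_take.2 (List.ext_getElem (by simp [hst]) fun i h₁ h₂ => ?_)
    rw [← hs i h₁, List.getElem_take, ← ht]
  exact ⟨t, (inter_eq_right.2 (baireCyl_subset_of_prefix hpre)).symm⟩

lemma setOf_apply_eq_eq_iUnion_baireCyl (n k : ℕ) :
    {x : ℕ → ℕ | x n = k} = ⋃ t : {t : List ℕ // t.length = n}, baireCyl (t.1 ++ [k]) := by
  ext x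
  simp only [mem_ofPred_eq, mem_iUnion, baireCyl_append_singleton, mem_inter_iff, Subtype.exists,
    exists_prop]
  constructor
  · rintro rfl
    exact ⟨(List.range n).map x, by simp, by simp [baireCyl], by simp⟩
  · rintro ⟨t, rfl, -, h⟩
    exact h

lemma generateFrom_range_baireCyl :
    MeasurableSpace.generateFrom (range baireCyl) = MeasurableSpace.pi := by
  refine le_antisymm (MeasurableSpace.generateFrom_le ?_) ?_
  · rintro _ ⟨t, rfl⟩
    exact measurableSet_baireCyl t
  · have hcoord (n : ℕ) :
        Measurable[MeasurableSpace.generateFrom (range baireCyl)] fun x : ℕ → ℕ => x n := by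
      refine @measurable_to_countable' ℕ (ℕ → ℕ) _ _ (.generateFrom (range baireCyl)) _ fun k => ?_
      simp only [preimage, mem_singleton_iff]
      rw [setOf_apply_eq_eq_iUnion_baireCyl]
      exact .iUnion fun t => MeasurableSpace.measurableSet_generateFrom ⟨_, rfl⟩
    exact iSup_le fun n => (hcoord n).comap_le

theorem ext_of_baireCyl {μ ν : Measure (ℕ → ℕ)} [IsFiniteMeasure μ]
    (h : ∀ t, μ (baireCyl t) = ν (baireCyl t)) : μ = ν := by
  refine ext_of_generate_finite _ generateFrom_range_baireCyl.symm isPiSystem_range_baireCyl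
    ?_ (by simpa using h [])
  rintro _ ⟨t, rfl⟩
  exact h t

section Intervals

variable (m : List ℕ → ℝ≥0∞)

-- the mass of the nodes that branch off to the left of `t`
def leftEnd (t : List ℕ) : ℝ≥0∞ :=
  ∑ i ∈ Finset.range t.length, ∑ j ∈ Finset.range (t.getD i 0), m (t.take i ++ [j])

def interval (t : List ℕ) : Set ℝ≥0∞ := Ico (leftEnd m t) (leftEnd m t + m t)

@[simp] lemma leftEnd_nil : leftEnd m [] = 0 := by
  simp [leftEnd]

lemma leftEnd_append_singleton (t : List ℕ) (k : ℕ) :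
    leftEnd m (t ++ [k]) = leftEnd m t + ∑ j ∈ Finset.range k, m (t ++ [j]) := by
  rw [leftEnd, List.length_append, List.length_singleton, Finset.sum_range_succ]
  congr 1
  · refine Finset.sum_congr rfl fun i hi => ?_
    have hi : i < t.length := Finset.mem_range.1 hi
    rw [List.take_append_of_le_length hi.le, List.getD_append _ _ _ _ hi]
  · simp

lemma leftEnd_append_succ (t : List ℕ) (k : ℕ) :
    leftEnd m (t ++ [k + 1]) = leftEnd m (t ++ [k]) + m (t ++ [k]) := by
  rw [leftEnd_append_singleton, leftEnd_append_singleton, Finset.sum_range_succ, add_assoc]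

lemma monotone_leftEnd_append (t : List ℕ) : Monotone fun k => leftEnd m (t ++ [k]) :=
  monotone_nat_of_le_succ fun k => by
    rw [leftEnd_append_succ]
    exact le_self_add

lemma disjoint_interval_append {t : List ℕ} {j k : ℕ} (hjk : j ≠ k) :
    Disjoint (interval m (t ++ [j])) (interval m (t ++ [k])) := by
  wlog hlt : j < k generalizing j k
  · exact (this hjk.symm (hjk.lt_or_gt.resolve_left hlt)).symm
  refine Ico_disjoint_Ico.2 ((min_le_left _ _).trans (le_trans ?_ (le_max_right _ _)))
  rw [← leftEnd_append_succ]
  exact monotone_leftEnd_append m t hlt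

open Classical in
def childIndex (t : List ℕ) (c : ℝ≥0∞) : ℕ :=
  if h : ∃ k, c ∈ interval m (t ++ [k]) then h.choose else 0

def branchPrefix (c : ℝ≥0∞) : ℕ → List ℕ
  | 0 => []
  | n + 1 => branchPrefix c n ++ [childIndex m (branchPrefix c n) c]

def branch (c : ℝ≥0∞) (n : ℕ) : ℕ := childIndex m (branchPrefix m c n) c

lemma childIndex_eq_iff {t : List ℕ} {c : ℝ≥0∞} {k : ℕ} :
    childIndex m t c = k ↔ c ∈ interval m (t ++ [k]) ∨ (k = 0 ∧ ∀ j, c ∉ interval m (t ++ [j])) := by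
  by_cases h : ∃ j, c ∈ interval m (t ++ [j])
  · have hall : ¬ ∀ j, c ∉ interval m (t ++ [j]) := fun hall => hall _ h.choose_spec
    simp only [childIndex, dif_pos h, hall, and_false, or_false]
    refine ⟨fun hk => hk ▸ h.choose_spec, fun hk => ?_⟩
    by_contra hne
    exact (disjoint_interval_append m hne).ne_of_mem h.choose_spec hk rfl
  · push Not at h
    simp [childIndex, h, eq_comm]

lemma length_branchPrefix (c : ℝ≥0∞) (n : ℕ) : (branchPrefix m c n).length = n := by
  induction n with
  | zero => rfl
  | succ n ih => simp [branchPrefix, ih]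

lemma map_range_branch (c : ℝ≥0∞) (n : ℕ) :
    (List.range n).map (branch m c) = branchPrefix m c n := by
  induction n with
  | zero => rfl
  | succ n ih => rw [List.range_succ, List.map_append, ih]; rfl

lemma measurable_childIndex (t : List ℕ) : Measurable (childIndex m t) := by
  refine measurable_to_countable' fun k => ?_
  have : childIndex m t ⁻¹' {k} =
      interval m (t ++ [k]) ∪ {_c | k = 0} ∩ ⋂ j, (interval m (t ++ [j]))ᶜ := by
    ext c
    simp [childIndex_eq_iff]
  rw [this]
  exact measurableSet_Ico.union
    ((MeasurableSet.const _).inter (MeasurableSet.iInter fun j => measurableSet_Ico.compl))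

lemma measurableSet_branchPrefix_eq (n : ℕ) (s : List ℕ) :
    MeasurableSet {c | branchPrefix m c n = s} := by
  induction n generalizing s with
  | zero => exact MeasurableSet.const ([] = s)
  | succ n ih =>
    have : {c | branchPrefix m c (n + 1) = s} =
        ⋃ t, {c | branchPrefix m c n = t} ∩ childIndex m t ⁻¹' {k | t ++ [k] = s} := by
      ext c
      simp [branchPrefix]
    rw [this]
    exact .iUnion fun t => (ih t).inter (measurable_childIndex m t .of_discrete)

lemma measurable_branch : Measurable (branch m) := by
  refine measurable_pi_lambda _ fun n => measurable_to_countable' fun k => ?_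
  have : (fun c => branch m c n) ⁻¹' {k} =
      ⋃ t, {c | branchPrefix m c n = t} ∩ childIndex m t ⁻¹' {k} := by
    ext c
    simp [branch]
  rw [this]
  exact .iUnion fun t => (measurableSet_branchPrefix_eq m n t).inter
    (measurable_childIndex m t (measurableSet_singleton k))

variable {m} (hm : ∀ t, m t = ∑' k, m (t ++ [k]))
include hm

lemma leftEnd_append_add_le (t : List ℕ) (k : ℕ) :
    leftEnd m (t ++ [k]) + m (t ++ [k]) ≤ leftEnd m t + m t := by
  rw [← leftEnd_append_succ, leftEnd_append_singleton, hm t]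
  gcongr
  exact ENNReal.sum_le_tsum _

lemma interval_append_subset (t : List ℕ) (k : ℕ) : interval m (t ++ [k]) ⊆ interval m t := by
  refine Ico_subset_Ico ?_ (leftEnd_append_add_le hm t k)
  rw [leftEnd_append_singleton]
  exact le_self_add

lemma interval_subset_interval_nil (t : List ℕ) : interval m t ⊆ interval m [] := by
  induction t using List.reverseRecOn with
  | nil => rfl
  | append_singleton t k ih => exact (interval_append_subset hm t k).trans ih

lemma leftEnd_add_le (t : List ℕ) : leftEnd m t + m t ≤ m [] := by
  induction t using List.reverseRecOn with
  | nil => simp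
  | append_singleton t k ih => exact (leftEnd_append_add_le hm t k).trans ih

lemma exists_mem_interval_append {t : List ℕ} {c : ℝ≥0∞} (hc : c ∈ interval m t) :
    ∃ k, c ∈ interval m (t ++ [k]) := by
  obtain ⟨n, hn⟩ : ∃ n, c < leftEnd m (t ++ [n]) := by
    have := hc.2
    simp_rw [leftEnd_append_singleton]
    rwa [hm t, ENNReal.tsum_eq_iSup_nat, ENNReal.add_iSup, lt_iSup_iff] at this
  by_contra! hnot
  have hle : ∀ k, leftEnd m (t ++ [k]) ≤ c := by
    intro k
    induction k with
    | zero => simpa [leftEnd_append_singleton] using hc.1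
    | succ k ih =>
      rw [leftEnd_append_succ]
      exact not_lt.1 fun h => hnot k ⟨ih, h⟩
  exact (hle n).not_gt hn

lemma eq_of_mem_interval {s t : List ℕ} {c : ℝ≥0∞} (hs : c ∈ interval m s)
    (ht : c ∈ interval m t) (hlen : s.length = t.length) : s = t := by
  induction s using List.reverseRecOn generalizing t with
  | nil => exact (List.eq_nil_of_length_eq_zero hlen.symm).symm
  | append_singleton s j ih =>
    induction t using List.reverseRecOn with
    | nil => simp at hlen
    | append_singleton t k =>
      simp only [List.length_append, List.length_singleton, add_left_inj] at hlen
      obtain rfl := ih (interval_append_subset hm s j hs) (interval_append_subset hm t k ht) hlen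
      by_contra hjk
      exact (disjoint_interval_append m fun h => hjk (by rw [h])).ne_of_mem hs ht rfl

lemma mem_interval_branchPrefix {c : ℝ≥0∞} (hc : c ∈ interval m []) (n : ℕ) :
    c ∈ interval m (branchPrefix m c n) := by
  induction n with
  | zero => exact hc
  | succ n ih =>
    obtain ⟨k, hk⟩ := exists_mem_interval_append hm ih
    rw [branchPrefix, (childIndex_eq_iff m).2 (.inl hk)]
    exact hk

lemma branch_mem_baireCyl_iff {c : ℝ≥0∞} (hc : c ∈ interval m []) {t : List ℕ} :
    branch m c ∈ baireCyl t ↔ c ∈ interval m t := by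
  rw [baireCyl, mem_ofPred_eq, map_range_branch]
  refine ⟨fun h => h ▸ mem_interval_branchPrefix hm hc _, fun h => ?_⟩
  exact eq_of_mem_interval hm (mem_interval_branchPrefix hm hc _) h (length_branchPrefix m c _)

lemma preimage_branch_baireCyl_inter (t : List ℕ) :
    branch m ⁻¹' baireCyl t ∩ interval m [] = interval m t := by
  ext c
  simp only [mem_inter_iff, mem_preimage]
  exact ⟨fun ⟨h, hc⟩ => (branch_mem_baireCyl_iff hm hc).1 h,
    fun h => ⟨(branch_mem_baireCyl_iff hm (interval_subset_interval_nil hm t h)).2 h,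
      interval_subset_interval_nil hm t h⟩⟩

end Intervals

def uniformUnit : Measure ℝ≥0∞ := ((volume : Measure ℝ).restrict (Ico 0 1)).map ENNReal.ofReal

lemma uniformUnit_Ico {a b : ℝ≥0∞} (hab : a ≤ b) (hb : b ≤ 1) : uniformUnit (Ico a b) = b - a := by
  have hb' : b ≠ ∞ := ne_top_of_le_ne_top ENNReal.one_ne_top hb
  have hpre : ENNReal.ofReal ⁻¹' Ico a b ∩ Ico 0 1 = Ico a.toReal b.toReal := by
    ext r
    simp only [mem_inter_iff, mem_preimage, mem_Ico]
    constructor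
    · rintro ⟨⟨har, hrb⟩, hr0, -⟩
      exact ⟨ENNReal.toReal_le_of_le_ofReal hr0 har, (ENNReal.ofReal_lt_iff_lt_toReal hr0 hb').1 hrb⟩
    · rintro ⟨har, hrb⟩
      have hr0 : 0 ≤ r := ENNReal.toReal_nonneg.trans har
      refine ⟨⟨(ENNReal.le_ofReal_iff_toReal_le (ne_top_of_le_ne_top hb' hab) hr0).2 har,
        (ENNReal.ofReal_lt_iff_lt_toReal hr0 hb').2 hrb⟩, hr0, hrb.trans_le ?_⟩
      exact ENNReal.toReal_le_of_le_ofReal zero_le_one (by simpa using hb)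
  rw [uniformUnit, Measure.map_apply ENNReal.measurable_ofReal measurableSet_Ico,
    Measure.restrict_apply (ENNReal.measurable_ofReal measurableSet_Ico), hpre, Real.volume_Ico,
    ← ENNReal.toReal_sub_of_le hab hb', ENNReal.ofReal_toReal (ENNReal.sub_ne_top hb')]

lemma uniformUnit_compl_Iio_one : uniformUnit (Iio 1)ᶜ = 0 := by
  rw [uniformUnit, Measure.map_apply ENNReal.measurable_ofReal measurableSet_Iio.compl,
    Measure.restrict_apply (ENNReal.measurable_ofReal measurableSet_Iio.compl)]
  convert measure_empty (μ := (volume : Measure ℝ))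
  refine eq_empty_of_forall_notMem fun r ⟨hr1, hr⟩ => hr1 ?_
  exact ENNReal.ofReal_lt_one.2 hr.2

def baireMeasure (m : List ℕ → ℝ≥0∞) : Measure (ℕ → ℕ) := uniformUnit.map (branch m)

theorem baireMeasure_baireCyl {m : List ℕ → ℝ≥0∞} (hm : ∀ t, m t = ∑' k, m (t ++ [k]))
    (hm_nil : m [] = 1) (t : List ℕ) : baireMeasure m (baireCyl t) = m t := by
  have hnil : interval m [] = Iio 1 := by
    ext c
    simp [interval, hm_nil]
  have hL : leftEnd m t ≠ ∞ := ne_top_of_le_ne_top ENNReal.one_ne_top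
    (le_self_add.trans (hm_nil ▸ leftEnd_add_le hm t))
  rw [baireMeasure, Measure.map_apply (measurable_branch m) (measurableSet_baireCyl t),
    ← measure_inter_conull (hnil ▸ uniformUnit_compl_Iio_one), preimage_branch_baireCyl_inter hm,
    interval, uniformUnit_Ico le_self_add (hm_nil ▸ leftEnd_add_le hm t),
    ENNReal.add_sub_cancel_left hL]

section Tree

variable {T : Set (List ℕ)}

lemma IsTree.nil_mem (hT : IsTree T) : [] ∈ T :=
  hT.1.elim fun t ht => hT.2 [] t List.nil_prefix ht

lemma indicator_eq_tsum_indicator {ξ : List ℕ → ℝ≥0∞} (hT : IsTree T) (hpr : Pruned T)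
    (hξ : IsIPM T ξ) (t : List ℕ) : T.indicator ξ t = ∑' k, T.indicator ξ (t ++ [k]) := by
  by_cases ht : t ∈ T
  · obtain ⟨k, hk⟩ := hpr t ht
    rw [indicator_of_mem ht, hξ.2 t ht fun hmax => hmax k hk]
    exact tsum_subtype {k | t ++ [k] ∈ T} fun k => ξ (t ++ [k])
  · have hchild (k : ℕ) : t ++ [k] ∉ T := fun h => ht (hT.2 t _ (List.prefix_append t [k]) h)
    simp [indicator_of_notMem ht, indicator_of_notMem (hchild _)]

lemma compl_limT (T : Set (List ℕ)) : (limT T)ᶜ = ⋃ t ∈ Tᶜ, baireCyl t := by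
  ext x
  simp only [limT, baireCyl, mem_compl_iff, mem_ofPred_eq, not_forall, mem_iUnion, exists_prop]
  constructor
  · rintro ⟨n, hn⟩
    exact ⟨_, hn, by simp⟩
  · rintro ⟨t, ht, h⟩
    exact ⟨t.length, by rwa [h]⟩

lemma measurableSet_limT (T : Set (List ℕ)) : MeasurableSet (limT T) := by
  rw [← compl_compl (limT T), compl_limT]
  exact (MeasurableSet.biUnion (to_countable _) fun t _ => measurableSet_baireCyl t).compl

lemma measure_compl_limT {μ : Measure (ℕ → ℕ)} (h : ∀ t ∉ T, μ (baireCyl t) = 0) :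
    μ (limT T)ᶜ = 0 := by
  rw [compl_limT, measure_biUnion_null_iff (to_countable _)]
  exact h

lemma cyl_eq_empty {t : List ℕ} (ht : t ∉ T) : cyl T t = ∅ :=
  eq_empty_of_forall_notMem fun x hx => ht (hx ▸ x.2 t.length)

lemma cyl_eq_preimage_baireCyl (t : List ℕ) : cyl T t = Subtype.val ⁻¹' baireCyl t := rfl

lemma map_val_baireCyl (lam : Measure ↥(limT T)) (t : List ℕ) :
    lam.map Subtype.val (baireCyl t) = lam (cyl T t) :=
  Measure.map_apply measurable_subtype_coe (measurableSet_baireCyl t)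

lemma ext_of_cyl {lam lam' : Measure ↥(limT T)} [IsFiniteMeasure lam]
    (h : ∀ t ∈ T, lam (cyl T t) = lam' (cyl T t)) : lam = lam' := by
  refine (MeasurableEmbedding.subtype_coe (measurableSet_limT T)).map_injective
    (ext_of_baireCyl fun t => ?_)
  rw [map_val_baireCyl, map_val_baireCyl]
  by_cases ht : t ∈ T
  · exact h t ht
  · simp [cyl_eq_empty ht]

end Tree

theorem stmt7 (T : Set (List ℕ)) (ξ : List ℕ → ℝ≥0∞)
    (hT : IsTree T) (hpr : Pruned T) (hξ : IsIPM T ξ) :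
    ∃! lam : Measure ↥(limT T),
      IsProbabilityMeasure lam ∧ ∀ t ∈ T, lam (cyl T t) = ξ t := by
  have hm_nil : T.indicator ξ [] = 1 := by rw [indicator_of_mem hT.nil_mem, hξ.1]
  set μ := baireMeasure (T.indicator ξ)
  have hμ : ∀ t, μ (baireCyl t) = T.indicator ξ t :=
    baireMeasure_baireCyl (indicator_eq_tsum_indicator hT hpr hξ) hm_nil
  have hμ_limT : μ (limT T)ᶜ = 0 :=
    measure_compl_limT fun t ht => by rw [hμ, indicator_of_notMem ht]
  have : IsProbabilityMeasure μ := ⟨by rw [← baireCyl_nil, hμ, hm_nil]⟩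
  have hval : MeasurableEmbedding (Subtype.val : limT T → ℕ → ℕ) :=
    .subtype_coe (measurableSet_limT T)
  have hcyl (t : List ℕ) (ht : t ∈ T) : μ.comap Subtype.val (cyl T t) = ξ t := by
    rw [cyl_eq_preimage_baireCyl, hval.comap_apply, Subtype.image_preimage_coe, inter_comm,
      measure_inter_conull hμ_limT, hμ, indicator_of_mem ht]
  refine ⟨μ.comap Subtype.val, ⟨?_, hcyl⟩, fun lam ⟨hlam, hlam_cyl⟩ => ?_⟩
  · refine hval.isProbabilityMeasure_comap ?_
    rw [Subtype.range_coe]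
    exact hμ_limT
  · exact ext_of_cyl fun t ht => by rw [hlam_cyl t ht, hcyl t ht]
end
end

section
/- Let T be a pruned tree of sequences and ξ a free inductive probability measure on T (⨅_{n ∈ ℕ} ξ(x↾n) = 0 for every x ∈ lim T), let λ^ξ be the unique Borel probability measure on lim T with λ^ξ([t]) = ξ(t) for all t ∈ T, and define f_ξ : lim T → [0,1] by f_ξ(x) := ⨆_{n ∈ ℕ} a_{x↾n}. Then for every set B ⊆ [0,1]: B is a Borel subset of [0,1] if and only if f_ξ⁻¹(B) is a Borel subset of lim T; and in that case λ^ξ(f_ξ⁻¹(B)) equals the Lebesgue measure of B. -/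
/-!
The cylinder measure turns the combinatorics of the endpoints into measure theory: `aT t` is the
`lam`-measure of the branches that pass lexicographically below `t` at level `|t|`, and
`bT t = aT t + ξ t` that of the branches passing below or through `t`. Along a branch `x` the
intervals `[aT (x ↾ n), bT (x ↾ n)]` are therefore nested, and by freeness their lengths
`ξ (x ↾ n)` tend to `0`; they shrink to `fXi x`, which makes `fXi` continuous, and following the
nested intervals around any `v ∈ [0, 1)` produces a branch mapped to `v`. Two distinct branches
split into lexicographically ordered nodes `s < t`, and `bT s ≤ aT t`, so `fXi` is injective
outside the preimage of the countable set of left endpoints; Lusin–Souslin then shows that `B` is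
Borel when its preimage is. Finally the level-`n` intervals are disjoint and the `t`-th one has
length `lam [t]`, which bounds `lam {fXi < y}` by `y` and `lam {fXi > y}` by `1 - y`: the image
of `lam` has the distribution function of Lebesgue measure on `[0, 1]`.
-/

open scoped ENNReal
open MeasureTheory

noncomputable section

/-- `ξ` is free: all branches have measure (infimum) zero. -/
def FreeIPM (T : Set (List ℕ)) (ξ : List ℕ → ℝ≥0∞) : Prop :=
  ∀ x ∈ limT T, (⨅ n : ℕ, ξ ((List.range n).map x)) = 0

/-- Lexicographic order for lists (of equal length): they first differ at some
index `i < |s|` where `s` is smaller. -/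
def lexLt (s t : List ℕ) : Prop :=
  ∃ i : ℕ, i < s.length ∧ s.take i = t.take i ∧ s.getD i 0 < t.getD i 0

/-- The left endpoint `a_t` of the interval associated to `t`. -/
def aT (T : Set (List ℕ)) (ξ : List ℕ → ℝ≥0∞) (t : List ℕ) : ℝ :=
  (∑' s : {s : List ℕ // s ∈ T ∧ s.length = t.length ∧ lexLt s t}, ξ s.1).toReal

/-- The right endpoint `b_t = a_t + ξ(t)`. -/
def bT (T : Set (List ℕ)) (ξ : List ℕ → ℝ≥0∞) (t : List ℕ) : ℝ :=
  aT T ξ t + (ξ t).toReal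

/-- The set of endpoints `Q_ξ`. -/
def Qxi (T : Set (List ℕ)) (ξ : List ℕ → ℝ≥0∞) : Set ℝ :=
  {y | ∃ t ∈ T, y = aT T ξ t} ∪ {y | ∃ t ∈ T, y = bT T ξ t}

/-- The map `f_ξ : lim T → [0,1]`, `x ↦ sup_n a_{x↾n}`. -/
def fXi (T : Set (List ℕ)) (ξ : List ℕ → ℝ≥0∞) (x : ↥(limT T)) : ℝ :=
  ⨆ n : ℕ, aT T ξ ((List.range n).map x.1)

notation:70 x:max " ↾ " n:71 => List.map x (List.range n)

open Filter Topology

section Lists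

variable {s t u : List ℕ} {i j k : ℕ}

theorem res_length (x : ℕ → ℕ) (n : ℕ) : (x ↾ n).length = n := by simp

theorem res_succ (x : ℕ → ℕ) (n : ℕ) : x ↾ (n + 1) = x ↾ n ++ [x n] := by
  simp [List.range_succ]

theorem res_eq_res_iff {x y : ℕ → ℕ} {n : ℕ} : x ↾ n = y ↾ n ↔ ∀ i < n, x i = y i := by
  simp [List.map_inj_left]

theorem take_eq_take_of_take_eq (h : s.take j = t.take j) (hij : i ≤ j) :
    s.take i = t.take i := by
  simpa [List.take_take, min_eq_left hij] using congrArg (List.take i) h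

theorem getD_eq_getD_of_take_eq (h : s.take j = t.take j) (hij : i < j) :
    s.getD i 0 = t.getD i 0 := by
  simpa [List.getElem?_take, hij] using congrArg (fun l => l.getD i 0) h

theorem lexLt.ne (h : lexLt s t) : s ≠ t := by
  rintro rfl
  obtain ⟨i, -, -, hi⟩ := h
  exact hi.false

theorem lexLt.trans (hst : lexLt s t) (htu : lexLt t u) : lexLt s u := by
  obtain ⟨i, hi, hsti, hlt⟩ := hst
  obtain ⟨i', -, htui, hlt'⟩ := htu
  rcases lt_trichotomy i i' with h | rfl | h
  · exact ⟨i, hi, hsti.trans (take_eq_take_of_take_eq htui h.le),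
      hlt.trans_eq (getD_eq_getD_of_take_eq htui h)⟩
  · exact ⟨i, hi, hsti.trans htui, hlt.trans hlt'⟩
  · exact ⟨i', h.trans hi, (take_eq_take_of_take_eq hsti h.le).trans htui,
      (getD_eq_getD_of_take_eq hsti h).trans_lt hlt'⟩

theorem lexLt_or_lexLt_of_ne (hlen : s.length = t.length) (hne : s ≠ t) :
    lexLt s t ∨ lexLt t s := by
  induction s generalizing t with
  | nil => cases t <;> simp_all
  | cons a s ih =>
    cases t with
    | nil => simp at hlen
    | cons b t =>
      rcases lt_trichotomy a b with hab | rfl | hab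
      · exact Or.inl ⟨0, by simp, by simp, by simpa using hab⟩
      · have hst : s ≠ t := fun h => hne (h ▸ rfl)
        rcases ih (by simpa using hlen) hst with ⟨i, hi, h1, h2⟩ | ⟨i, hi, h1, h2⟩
        · exact Or.inl ⟨i + 1, by simpa using hi, by simpa using h1, by simpa using h2⟩
        · exact Or.inr ⟨i + 1, by simpa using hi, by simpa using h1, by simpa using h2⟩
      · exact Or.inr ⟨0, by simp, by simp, by simpa using hab⟩

theorem getD_append_singleton_of_lt (hi : i < u.length) : (u ++ [j]).getD i 0 = u.getD i 0 := by
  simp [List.getElem?_append_left hi]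

theorem lexLt_append_singleton_iff (hlen : u.length = t.length) :
    lexLt (u ++ [j]) (t ++ [k]) ↔ lexLt u t ∨ u = t ∧ j < k := by
  constructor
  · rintro ⟨i, hi, htake, hlt⟩
    rw [List.length_append, List.length_singleton, Nat.lt_succ_iff] at hi
    rcases hi.lt_or_eq with hi | rfl
    · rw [List.take_append_of_le_length hi.le, List.take_append_of_le_length (hlen ▸ hi.le)]
        at htake
      rw [getD_append_singleton_of_lt hi, getD_append_singleton_of_lt (hlen ▸ hi)] at hlt
      exact Or.inl ⟨i, hi, htake, hlt⟩
    · obtain rfl : u = t := by simpa [hlen] using htake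
      exact Or.inr ⟨rfl, by simpa using hlt⟩
  · rintro (⟨i, hi, htake, hlt⟩ | ⟨rfl, hjk⟩)
    · refine ⟨i, by simp; omega, ?_, ?_⟩
      · rwa [List.take_append_of_le_length hi.le, List.take_append_of_le_length (hlen ▸ hi.le)]
      · rwa [getD_append_singleton_of_lt hi, getD_append_singleton_of_lt (hlen ▸ hi)]
    · exact ⟨u.length, by simp, by simp, by simpa⟩

end Lists

section Topology

theorem isOpen_setOf_res_mem (n : ℕ) (S : Set (List ℕ)) : IsOpen {x : ℕ → ℕ | x ↾ n ∈ S} := by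
  refine isOpen_iff_forall_mem_open.2 fun x hx =>
    ⟨PiNat.cylinder x n, fun y hy => ?_, PiNat.isOpen_cylinder _ x n, PiNat.self_mem_cylinder x n⟩
  show y ↾ n ∈ S
  rwa [res_eq_res_iff.2 (PiNat.mem_cylinder_iff.1 hy)]

theorem isClosed_limT (T : Set (List ℕ)) : IsClosed (limT T) := by
  have h : limT T = ⋂ n, {x : ℕ → ℕ | x ↾ n ∈ Tᶜ}ᶜ := by ext; simp [limT]
  rw [h]
  exact isClosed_iInter fun n => (isOpen_setOf_res_mem n Tᶜ).isClosed_compl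

instance (T : Set (List ℕ)) : PolishSpace (limT T) := (isClosed_limT T).polishSpace

variable {T : Set (List ℕ)}

theorem isOpen_setOf_res_mem_limT (n : ℕ) (S : Set (List ℕ)) :
    IsOpen {x : limT T | x.1 ↾ n ∈ S} :=
  (isOpen_setOf_res_mem n S).preimage continuous_subtype_val

theorem measurableSet_cyl (t : List ℕ) : MeasurableSet (cyl T t) :=
  (isOpen_setOf_res_mem_limT t.length {t}).measurableSet

end Topology

section Endpoints

variable {T : Set (List ℕ)} {s t : List ℕ} {k : ℕ}

def lexIio (T : Set (List ℕ)) (t : List ℕ) : Set (limT T) := {x | lexLt (x.1 ↾ t.length) t}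

def lexIic (T : Set (List ℕ)) (t : List ℕ) : Set (limT T) := lexIio T t ∪ cyl T t

theorem mem_cyl_iff {x : limT T} : x ∈ cyl T t ↔ x.1 ↾ t.length = t := Iff.rfl

theorem mem_cyl_append_iff {x : limT T} :
    x ∈ cyl T (t ++ [k]) ↔ x ∈ cyl T t ∧ x.1 t.length = k := by
  simp [mem_cyl_iff, res_succ]

theorem mem_lexIio_append_iff {x : limT T} :
    x ∈ lexIio T (t ++ [k]) ↔ x ∈ lexIio T t ∨ x ∈ cyl T t ∧ x.1 t.length < k := by
  simp only [lexIio, Set.mem_ofPred_eq, List.length_append, List.length_singleton, res_succ]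
  exact lexLt_append_singleton_iff (res_length _ _)

theorem lexIio_nil : lexIio T [] = ∅ := by
  ext x
  simp [lexIio, lexLt]

theorem lexIio_append_zero : lexIio T (t ++ [0]) = lexIio T t := by
  ext x
  simp [mem_lexIio_append_iff]

theorem lexIio_append_succ : lexIio T (t ++ [k + 1]) = lexIic T (t ++ [k]) := by
  ext x
  simp only [lexIic, Set.mem_union, mem_lexIio_append_iff, mem_cyl_append_iff,
    Nat.lt_succ_iff_lt_or_eq]
  tauto

theorem iUnion_lexIio_append : ⋃ k, lexIio T (t ++ [k]) = lexIic T t := by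
  ext x
  simp only [Set.mem_iUnion, mem_lexIio_append_iff, lexIic, Set.mem_union]
  exact ⟨fun ⟨k, h⟩ => h.imp_right And.left,
    fun h => ⟨x.1 t.length + 1, h.imp_right fun h => ⟨h, Nat.lt_succ_self _⟩⟩⟩

theorem lexIio_subset_lexIio_append : lexIio T t ⊆ lexIio T (t ++ [k]) :=
  fun _ hx => mem_lexIio_append_iff.2 (Or.inl hx)

theorem lexIic_append_subset_lexIic : lexIic T (t ++ [k]) ⊆ lexIic T t := by
  rw [← lexIio_append_succ, ← iUnion_lexIio_append]
  exact Set.subset_iUnion (fun j => lexIio T (t ++ [j])) (k + 1)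

theorem lexIic_subset_lexIio (hlen : s.length = t.length) (h : lexLt s t) :
    lexIic T s ⊆ lexIio T t := by
  rintro x (hx | hx) <;> show lexLt (x.1 ↾ t.length) t <;> rw [← hlen]
  · exact hx.trans h
  · rwa [hx]

end Endpoints

section CylinderMeasure

variable {T : Set (List ℕ)} {ξ : List ℕ → ℝ≥0∞} {lam : Measure (limT T)} {s t : List ℕ}

theorem measure_setOf_res_mem (hcyl : ∀ t ∈ T, lam (cyl T t) = ξ t) {n : ℕ} {S : Set (List ℕ)}
    (hS : ∀ s ∈ S, s ∈ T ∧ s.length = n) : lam {x | x.1 ↾ n ∈ S} = ∑' s : S, ξ s := by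
  have hU : {x : limT T | x.1 ↾ n ∈ S} = ⋃ s ∈ S, cyl T s := by
    ext x
    simp only [Set.mem_ofPred_eq, Set.mem_iUnion, mem_cyl_iff, exists_prop]
    refine ⟨fun hx => ⟨_, hx, by rw [res_length]⟩, ?_⟩
    rintro ⟨s, hs, hx⟩
    rw [(hS s hs).2] at hx
    rwa [hx]
  rw [hU, measure_biUnion S.to_countable ?_ fun s _ => measurableSet_cyl s]
  · exact tsum_congr fun s => hcyl s (hS s s.2).1
  · refine fun s hs s' hs' hne => Set.disjoint_left.2 fun x hx hx' => hne ?_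
    rw [mem_cyl_iff, (hS s hs).2] at hx
    rw [mem_cyl_iff, (hS s' hs').2] at hx'
    exact hx.symm.trans hx'

theorem aT_eq_measureReal (hcyl : ∀ t ∈ T, lam (cyl T t) = ξ t) (t : List ℕ) :
    aT T ξ t = lam.real (lexIio T t) := by
  have h : lexIio T t = {x | x.1 ↾ t.length ∈ {s | s ∈ T ∧ s.length = t.length ∧ lexLt s t}} := by
    ext x
    simp [lexIio, x.2 t.length]
  rw [measureReal_def, h, measure_setOf_res_mem hcyl fun s hs => ⟨hs.1, hs.2.1⟩]
  rfl

theorem bT_eq_measureReal [IsFiniteMeasure lam] (hcyl : ∀ t ∈ T, lam (cyl T t) = ξ t)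
    (ht : t ∈ T) : bT T ξ t = lam.real (lexIic T t) := by
  have hdisj : Disjoint (lexIio T t) (cyl T t) := Set.disjoint_left.2 fun x hx hx' => hx.ne hx'
  rw [bT, aT_eq_measureReal hcyl, ← hcyl t ht, lexIic,
    measureReal_union hdisj (measurableSet_cyl t)]
  rfl

theorem aT_nonneg : 0 ≤ aT T ξ t := ENNReal.toReal_nonneg

theorem aT_le_bT : aT T ξ t ≤ bT T ξ t := le_add_of_nonneg_right ENNReal.toReal_nonneg

theorem bT_le_one [IsProbabilityMeasure lam] (hcyl : ∀ t ∈ T, lam (cyl T t) = ξ t)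
    (ht : t ∈ T) : bT T ξ t ≤ 1 :=
  (bT_eq_measureReal hcyl ht).trans_le measureReal_le_one

theorem bT_le_aT_of_lexLt [IsFiniteMeasure lam] (hcyl : ∀ t ∈ T, lam (cyl T t) = ξ t)
    (hs : s ∈ T) (hlen : s.length = t.length) (h : lexLt s t) : bT T ξ s ≤ aT T ξ t := by
  rw [bT_eq_measureReal hcyl hs, aT_eq_measureReal hcyl]
  exact measureReal_mono (lexIic_subset_lexIio hlen h)

end CylinderMeasure

section Branch

variable {T : Set (List ℕ)} {ξ : List ℕ → ℝ≥0∞} {lam : Measure (limT T)} (x : limT T)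

theorem aT_res_mono [IsFiniteMeasure lam] (hcyl : ∀ t ∈ T, lam (cyl T t) = ξ t) :
    Monotone fun n => aT T ξ (x.1 ↾ n) := by
  refine monotone_nat_of_le_succ fun n => ?_
  simp only [res_succ, aT_eq_measureReal hcyl]
  exact measureReal_mono lexIio_subset_lexIio_append

theorem bT_res_anti [IsFiniteMeasure lam] (hcyl : ∀ t ∈ T, lam (cyl T t) = ξ t) :
    Antitone fun n => bT T ξ (x.1 ↾ n) := by
  refine antitone_nat_of_succ_le fun n => ?_
  simp only [bT_eq_measureReal hcyl (x.2 _)]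
  rw [res_succ]
  exact measureReal_mono lexIic_append_subset_lexIic

theorem fXi_mem_Icc [IsFiniteMeasure lam] (hcyl : ∀ t ∈ T, lam (cyl T t) = ξ t) (n : ℕ) :
    fXi T ξ x ∈ Set.Icc (aT T ξ (x.1 ↾ n)) (bT T ξ (x.1 ↾ n)) := by
  have hbdd : ∀ m, aT T ξ (x.1 ↾ m) ≤ bT T ξ (x.1 ↾ n) := fun m => by
    rcases le_total m n with h | h
    · exact (aT_res_mono x hcyl h).trans aT_le_bT
    · exact aT_le_bT.trans (bT_res_anti x hcyl h)
  exact ⟨le_ciSup ⟨_, Set.forall_mem_range.2 hbdd⟩ n, ciSup_le hbdd⟩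

theorem tendsto_xi_res (hcyl : ∀ t ∈ T, lam (cyl T t) = ξ t) (hfree : FreeIPM T ξ) :
    Tendsto (fun n => (ξ (x.1 ↾ n)).toReal) atTop (𝓝 0) := by
  have hanti : Antitone fun n => ξ (x.1 ↾ n) := by
    refine antitone_nat_of_succ_le fun n => ?_
    simp only [← hcyl _ (x.2 _)]
    rw [res_succ]
    exact measure_mono fun y hy => (mem_cyl_append_iff.1 hy).1
  have h := tendsto_atTop_iInf hanti
  rw [hfree x.1 x.2] at h
  have h' := (ENNReal.tendsto_toReal ENNReal.zero_ne_top).comp h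
  rwa [ENNReal.toReal_zero] at h'

theorem dist_fXi_le [IsFiniteMeasure lam] (hcyl : ∀ t ∈ T, lam (cyl T t) = ξ t) {w : ℝ} {n : ℕ}
    (hw : w ∈ Set.Icc (aT T ξ (x.1 ↾ n)) (bT T ξ (x.1 ↾ n))) :
    dist (fXi T ξ x) w ≤ (ξ (x.1 ↾ n)).toReal :=
  (Real.dist_le_of_mem_Icc (fXi_mem_Icc x hcyl n) hw).trans_eq (add_sub_cancel_left _ _)

theorem fXi_eq_of_forall_mem_Icc [IsFiniteMeasure lam] (hcyl : ∀ t ∈ T, lam (cyl T t) = ξ t)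
    (hfree : FreeIPM T ξ) {w : ℝ} (hw : ∀ n, w ∈ Set.Icc (aT T ξ (x.1 ↾ n)) (bT T ξ (x.1 ↾ n))) : fXi T ξ x = w := by
  refine eq_of_forall_dist_le fun ε hε => ?_
  obtain ⟨n, hn⟩ := ((tendsto_xi_res x hcyl hfree).eventually_lt_const hε).exists
  exact (dist_fXi_le x hcyl (hw n)).trans hn.le

theorem continuous_fXi [IsFiniteMeasure lam] (hcyl : ∀ t ∈ T, lam (cyl T t) = ξ t)
    (hfree : FreeIPM T ξ) : Continuous (fXi T ξ) := by
  refine continuous_iff_continuousAt.2 fun x => Metric.continuousAt_iff'.2 fun ε hε => ?_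
  obtain ⟨n, hn⟩ := ((tendsto_xi_res x hcyl hfree).eventually_lt_const hε).exists
  filter_upwards [(isOpen_setOf_res_mem_limT n {x.1 ↾ n}).mem_nhds rfl] with y hy
  have hy : y.1 ↾ n = x.1 ↾ n := hy
  rw [dist_comm]
  exact (dist_fXi_le x hcyl (hy ▸ fXi_mem_Icc y hcyl n)).trans_lt hn

end Branch

section Surjective

variable {T : Set (List ℕ)} {ξ : List ℕ → ℝ≥0∞} {lam : Measure (limT T)}

theorem exists_forall_res_of_forall_exists_append (P : List ℕ → Prop) (h0 : P [])
    (hstep : ∀ t, P t → ∃ k, P (t ++ [k])) : ∃ x : ℕ → ℕ, ∀ n, P (x ↾ n) := by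
  choose! c hc using hstep
  let path : ℕ → List ℕ := fun n => Nat.rec [] (fun _ t => t ++ [c t]) n
  have hpath : ∀ n, P (path n) := fun n => by
    induction n with
    | zero => exact h0
    | succ n ih => exact hc _ ih
  refine ⟨fun n => c (path n), fun n => ?_⟩
  have hres : ∀ n, (fun n => c (path n)) ↾ n = path n := fun n => by
    induction n with
    | zero => rfl
    | succ n ih => rw [res_succ, ih]
  rw [hres]
  exact hpath n

theorem exists_append_straddle {t : List ℕ} {w : ℝ≥0∞} (h₁ : lam (lexIio T t) ≤ w)
    (h₂ : w < lam (lexIic T t)) :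
    ∃ k, lam (lexIio T (t ++ [k])) ≤ w ∧ w < lam (lexIic T (t ++ [k])) := by
  have hmono : Monotone fun k => lexIio T (t ++ [k]) := monotone_nat_of_le_succ fun k => by
    simp only [lexIio_append_succ, lexIic]
    exact Set.subset_union_left
  have hex : ∃ k, w < lam (lexIio T (t ++ [k])) := by
    rwa [← lt_iSup_iff, ← hmono.measure_iUnion, iUnion_lexIio_append]
  classical
  obtain ⟨k, hk⟩ : ∃ k, Nat.find hex = k + 1 := by
    refine Nat.exists_eq_succ_of_ne_zero fun h0 => ?_
    have := Nat.find_spec hex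
    rw [h0, lexIio_append_zero] at this
    exact this.not_ge h₁
  refine ⟨k, not_lt.1 (Nat.find_min hex (by omega)), ?_⟩
  rw [← lexIio_append_succ, ← hk]
  exact Nat.find_spec hex

theorem exists_fXi_eq [IsProbabilityMeasure lam] (hcyl : ∀ t ∈ T, lam (cyl T t) = ξ t)
    (hfree : FreeIPM T ξ) {v : ℝ} (hv : v ∈ Set.Ico 0 1) : ∃ x, fXi T ξ x = v := by
  set w := ENNReal.ofReal v
  have hnil : lam (lexIio T []) ≤ w ∧ w < lam (lexIic T []) := by
    have huniv : lexIic T [] = Set.univ := by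
      rw [lexIic, lexIio_nil, Set.empty_union]
      exact Set.eq_univ_of_forall fun x => rfl
    rw [lexIio_nil, huniv, measure_empty, measure_univ]
    exact ⟨zero_le, ENNReal.ofReal_lt_one.2 hv.2⟩
  obtain ⟨x, hx⟩ := exists_forall_res_of_forall_exists_append
    (fun t => lam (lexIio T t) ≤ w ∧ w < lam (lexIic T t)) hnil
    fun t ht => exists_append_straddle ht.1 ht.2
  have hxT : x ∈ limT T := fun n => by
    obtain ⟨y, hy⟩ : (cyl T (x ↾ n)).Nonempty := by
      refine Set.nonempty_iff_ne_empty.2 fun h => (hx n).2.not_ge ?_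
      rw [lexIic, h, Set.union_empty]
      exact (hx n).1
    rw [mem_cyl_iff, res_length] at hy
    exact hy ▸ y.2 n
  refine ⟨⟨x, hxT⟩, fXi_eq_of_forall_mem_Icc _ hcyl hfree fun n => ⟨?_, ?_⟩⟩
  · rw [aT_eq_measureReal hcyl]
    exact ENNReal.toReal_le_of_le_ofReal hv.1 (hx n).1
  · rw [bT_eq_measureReal hcyl (hxT n), measureReal_def,
      ← ENNReal.ofReal_le_iff_le_toReal (measure_ne_top _ _)]
    exact (hx n).2.le

end Surjective

section Borel

variable {T : Set (List ℕ)} {ξ : List ℕ → ℝ≥0∞} {lam : Measure (limT T)}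

theorem fXi_le_aT_of_lexLt [IsFiniteMeasure lam] (hcyl : ∀ t ∈ T, lam (cyl T t) = ξ t)
    {x y : limT T} {n : ℕ} (h : lexLt (x.1 ↾ n) (y.1 ↾ n)) : fXi T ξ x ≤ aT T ξ (y.1 ↾ n) :=
  (fXi_mem_Icc x hcyl n).2.trans
    (bT_le_aT_of_lexLt hcyl (x.2 n) (by rw [res_length, res_length]) h)

theorem fXi_mem_range_aT_of_ne [IsFiniteMeasure lam] (hcyl : ∀ t ∈ T, lam (cyl T t) = ξ t)
    {x y : limT T} (hne : x ≠ y) (h : fXi T ξ x = fXi T ξ y) : fXi T ξ x ∈ Set.range (aT T ξ) := by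
  obtain ⟨i, hi⟩ : ∃ i, x.1 i ≠ y.1 i := by
    by_contra! hall
    exact hne (Subtype.ext (funext hall))
  have hres : x.1 ↾ (i + 1) ≠ y.1 ↾ (i + 1) := fun h => hi (res_eq_res_iff.1 h i i.lt_succ_self)
  rcases lexLt_or_lexLt_of_ne (by rw [res_length, res_length]) hres with hlt | hlt
  · exact ⟨_, le_antisymm (h ▸ (fXi_mem_Icc y hcyl _).1) (fXi_le_aT_of_lexLt hcyl hlt)⟩
  · exact ⟨_, le_antisymm (fXi_mem_Icc x hcyl _).1 (h ▸ fXi_le_aT_of_lexLt hcyl hlt)⟩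

theorem measurableSet_of_measurableSet_preimage_fXi [IsProbabilityMeasure lam]
    (hcyl : ∀ t ∈ T, lam (cyl T t) = ξ t) (hfree : FreeIPM T ξ) {B : Set ℝ}
    (hB : B ⊆ Set.Icc 0 1) (hpre : MeasurableSet (fXi T ξ ⁻¹' B)) : MeasurableSet B := by
  set Q := insert 1 (Set.range (aT T ξ))
  have hQ : Q.Countable := (Set.countable_range _).insert 1
  have hf := continuous_fXi hcyl hfree
  -- `fXi` is only known to be onto `[0, 1)`, hence the extra point `1` in `Q`.
  have hsurj : B \ Q ⊆ Set.range (fXi T ξ) := fun v hv => exists_fXi_eq hcyl hfree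
    ⟨(hB hv.1).1, (hB hv.1).2.lt_of_ne fun h => hv.2 (h ▸ Set.mem_insert 1 _)⟩
  have hinj : Set.InjOn (fXi T ξ) (fXi T ξ ⁻¹' (B \ Q)) := fun x hx y _ hxy => by
    by_contra hne
    exact hx.2 (Set.mem_insert_of_mem 1 (fXi_mem_range_aT_of_ne hcyl hne hxy))
  have himage := (hpre.diff (hf.measurable hQ.measurableSet)).image_of_continuousOn_injOn
    hf.continuousOn hinj
  rw [← Set.preimage_sdiff, Set.image_preimage_eq_of_subset hsurj] at himage
  rw [← Set.inter_union_sdiff B Q]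
  exact (hQ.mono Set.inter_subset_right).measurableSet.union himage

end Borel

section Distribution

open Set

variable {T : Set (List ℕ)} {ξ : List ℕ → ℝ≥0∞} {lam : Measure (limT T)}

theorem measure_setOf_res_le_volume [IsFiniteMeasure lam] (hcyl : ∀ t ∈ T, lam (cyl T t) = ξ t)
    (n : ℕ) (P : List ℕ → Prop) {I : Set ℝ}
    (hI : ∀ t ∈ T, P t → Ico (aT T ξ t) (bT T ξ t) ⊆ I) : lam {x | P (x.1 ↾ n)} ≤ volume I := by
  set S := {t | t ∈ T ∧ t.length = n ∧ P t}
  have hS : {x : limT T | P (x.1 ↾ n)} = {x | x.1 ↾ n ∈ S} := by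
    ext x
    simp [S, x.2 n]
  have hdisj : S.PairwiseDisjoint fun t => Ico (aT T ξ t) (bT T ξ t) := by
    refine fun s hs t ht hne => disjoint_left.2 fun z hzs hzt => ?_
    rcases lexLt_or_lexLt_of_ne (hs.2.1.trans ht.2.1.symm) hne with h | h
    · linarith [hzs.2, hzt.1, bT_le_aT_of_lexLt hcyl hs.1 (hs.2.1.trans ht.2.1.symm) h]
    · linarith [hzs.1, hzt.2, bT_le_aT_of_lexLt hcyl ht.1 (ht.2.1.trans hs.2.1.symm) h]
  calc lam {x | P (x.1 ↾ n)} = ∑' t : S, ξ t := by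
        rw [hS, measure_setOf_res_mem hcyl fun t ht => ⟨ht.1, ht.2.1⟩]
    _ = volume (⋃ t ∈ S, Ico (aT T ξ t) (bT T ξ t)) := by
        rw [measure_biUnion S.to_countable hdisj fun _ _ => measurableSet_Ico]
        refine tsum_congr fun t => ?_
        rw [Real.volume_Ico, bT, add_sub_cancel_left,
          ENNReal.ofReal_toReal (hcyl t t.2.1 ▸ measure_ne_top lam _)]
    _ ≤ volume I := measure_mono (iUnion₂_subset fun t ht => hI t ht.1 ht.2.2)

theorem measure_preimage_fXi_Iio_le [IsProbabilityMeasure lam]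
    (hcyl : ∀ t ∈ T, lam (cyl T t) = ξ t) (hfree : FreeIPM T ξ) (y : ℝ) :
    lam (fXi T ξ ⁻¹' Iio y) ≤ ENNReal.ofReal y := by
  have hU : fXi T ξ ⁻¹' Iio y = ⋃ n, {x | bT T ξ (x.1 ↾ n) < y} := by
    ext x
    simp only [mem_preimage, mem_Iio, mem_iUnion, mem_ofPred_eq]
    refine ⟨fun h => ?_, fun ⟨n, hn⟩ => (fXi_mem_Icc x hcyl n).2.trans_lt hn⟩
    obtain ⟨n, hn⟩ := ((tendsto_xi_res x hcyl hfree).eventually_lt_const (sub_pos.2 h)).exists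
    refine ⟨n, ?_⟩
    rw [bT]
    linarith [(fXi_mem_Icc x hcyl n).1]
  rw [hU, Monotone.measure_iUnion (s := fun n => {x : limT T | bT T ξ (x.1 ↾ n) < y})
    fun m n hmn x hx => (bT_res_anti x hcyl hmn).trans_lt hx]
  refine iSup_le fun n => (measure_setOf_res_le_volume hcyl n (fun t => bT T ξ t < y)
    fun t _ ht => Ico_subset_Ico aT_nonneg ht.le).trans_eq ?_
  rw [Real.volume_Ico, sub_zero]

theorem measure_preimage_fXi_Ioi_le [IsProbabilityMeasure lam]
    (hcyl : ∀ t ∈ T, lam (cyl T t) = ξ t) (hfree : FreeIPM T ξ) (y : ℝ) :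
    lam (fXi T ξ ⁻¹' Ioi y) ≤ ENNReal.ofReal (1 - y) := by
  have hU : fXi T ξ ⁻¹' Ioi y = ⋃ n, {x | y < aT T ξ (x.1 ↾ n)} := by
    ext x
    simp only [mem_preimage, mem_Ioi, mem_iUnion, mem_ofPred_eq]
    refine ⟨fun h => ?_, fun ⟨n, hn⟩ => hn.trans_le (fXi_mem_Icc x hcyl n).1⟩
    obtain ⟨n, hn⟩ := ((tendsto_xi_res x hcyl hfree).eventually_lt_const (sub_pos.2 h)).exists
    have hb := (fXi_mem_Icc x hcyl n).2
    rw [bT] at hb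
    exact ⟨n, by linarith⟩
  rw [hU, Monotone.measure_iUnion (s := fun n => {x : limT T | y < aT T ξ (x.1 ↾ n)})
    fun m n hmn x hx => hx.trans_le (aT_res_mono x hcyl hmn)]
  refine iSup_le fun n => (measure_setOf_res_le_volume hcyl n (fun t => y < aT T ξ t)
    fun t htT ht => Ico_subset_Ico ht.le (bT_le_one hcyl htT)).trans_eq ?_
  rw [Real.volume_Ico]

theorem measure_preimage_fXi_Iic [IsProbabilityMeasure lam]
    (hcyl : ∀ t ∈ T, lam (cyl T t) = ξ t) (hfree : FreeIPM T ξ) {y : ℝ} (hy : y ∈ Icc 0 1) :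
    lam (fXi T ξ ⁻¹' Iic y) = ENNReal.ofReal y := by
  refine le_antisymm ?_ ?_
  · have hlim : Tendsto ENNReal.ofReal (𝓝[>] y) (𝓝 (ENNReal.ofReal y)) :=
      ENNReal.continuous_ofReal.continuousAt.tendsto.mono_left nhdsWithin_le_nhds
    refine ge_of_tendsto hlim (eventually_nhdsWithin_of_forall fun y' hy' => ?_)
    exact (measure_mono (preimage_mono (Iic_subset_Iio.2 hy'))).trans
      (measure_preimage_fXi_Iio_le hcyl hfree y')
  · have hmeas : MeasurableSet (fXi T ξ ⁻¹' Iic y) :=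
      (continuous_fXi hcyl hfree).measurable measurableSet_Iic
    refine ENNReal.le_of_add_le_add_right (ENNReal.ofReal_ne_top (r := 1 - y)) ?_
    calc ENNReal.ofReal y + ENNReal.ofReal (1 - y) = 1 := by
          rw [← ENNReal.ofReal_add hy.1 (sub_nonneg.2 hy.2), add_sub_cancel, ENNReal.ofReal_one]
      _ = lam (fXi T ξ ⁻¹' Iic y) + lam (fXi T ξ ⁻¹' Ioi y) := by
          rw [← compl_Iic, preimage_compl, measure_add_measure_compl hmeas, measure_univ]
      _ ≤ lam (fXi T ξ ⁻¹' Iic y) + ENNReal.ofReal (1 - y) :=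
          add_le_add_right (measure_preimage_fXi_Ioi_le hcyl hfree y) _

theorem fXi_mem_Icc_zero_one [IsProbabilityMeasure lam] (hcyl : ∀ t ∈ T, lam (cyl T t) = ξ t)
    (x : limT T) : fXi T ξ x ∈ Icc 0 1 :=
  ⟨aT_nonneg.trans (fXi_mem_Icc x hcyl 0).1,
    (fXi_mem_Icc x hcyl 0).2.trans (bT_le_one hcyl (x.2 0))⟩

theorem map_fXi [IsProbabilityMeasure lam] (hcyl : ∀ t ∈ T, lam (cyl T t) = ξ t)
    (hfree : FreeIPM T ξ) : lam.map (fXi T ξ) = volume.restrict (Icc 0 1) := by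
  have hf := (continuous_fXi hcyl hfree).measurable
  refine Measure.ext_of_Iic _ _ fun y => ?_
  rw [Measure.map_apply hf measurableSet_Iic, Measure.restrict_apply measurableSet_Iic]
  rcases lt_or_ge y 0 with hy0 | hy0
  · have h₁ : fXi T ξ ⁻¹' Iic y = ∅ := eq_empty_of_forall_notMem fun x hx =>
      (hy0.trans_le (fXi_mem_Icc_zero_one hcyl x).1).not_ge hx
    have h₂ : Iic y ∩ Icc 0 1 = ∅ := eq_empty_of_forall_notMem fun z hz =>
      (hy0.trans_le hz.2.1).not_ge hz.1
    rw [h₁, h₂, measure_empty, measure_empty]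
  rcases le_or_gt y 1 with hy1 | hy1
  · have h₂ : Iic y ∩ Icc 0 1 = Icc 0 y := by
      ext z
      simp only [mem_inter_iff, mem_Iic, mem_Icc]
      exact ⟨fun h => ⟨h.2.1, h.1⟩, fun h => ⟨h.2, h.1, h.2.trans hy1⟩⟩
    rw [measure_preimage_fXi_Iic hcyl hfree ⟨hy0, hy1⟩, h₂, Real.volume_Icc, sub_zero]
  · have h₁ : fXi T ξ ⁻¹' Iic y = univ := eq_univ_of_forall fun x =>
      (fXi_mem_Icc_zero_one hcyl x).2.trans hy1.le
    rw [h₁, measure_univ, inter_eq_right.2 (Icc_subset_Iic_self.trans (Iic_subset_Iic.2 hy1.le)),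
      Real.volume_Icc, sub_zero, ENNReal.ofReal_one]

end Distribution

theorem stmt16_general (T : Set (List ℕ)) (ξ : List ℕ → ℝ≥0∞)
    (hfree : FreeIPM T ξ)
    (lam : Measure ↥(limT T)) (hlam : IsProbabilityMeasure lam)
    (hcyl : ∀ t ∈ T, lam (cyl T t) = ξ t) :
    ∀ B : Set ℝ, B ⊆ Set.Icc (0 : ℝ) 1 →
      ((MeasurableSet B ↔ MeasurableSet (fXi T ξ ⁻¹' B)) ∧
        (MeasurableSet B → lam (fXi T ξ ⁻¹' B) = volume B)) := by
  intro B hB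
  have hf : Measurable (fXi T ξ) := (continuous_fXi hcyl hfree).measurable
  refine ⟨⟨fun h => hf h, measurableSet_of_measurableSet_preimage_fXi hcyl hfree hB⟩, fun h => ?_⟩
  rw [← Measure.map_apply hf h, map_fXi hcyl hfree, Measure.restrict_apply h,
    Set.inter_eq_self_of_subset_left hB]

theorem stmt16 (T : Set (List ℕ)) (ξ : List ℕ → ℝ≥0∞)
    (hT : IsTree T) (hpr : Pruned T) (hξ : IsIPM T ξ) (hfree : FreeIPM T ξ)
    (lam : Measure ↥(limT T)) (hlam : IsProbabilityMeasure lam)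
    (hcyl : ∀ t ∈ T, lam (cyl T t) = ξ t) :
    ∀ B : Set ℝ, B ⊆ Set.Icc (0 : ℝ) 1 →
      ((MeasurableSet B ↔ MeasurableSet (fXi T ξ ⁻¹' B)) ∧
        (MeasurableSet B → lam (fXi T ξ ⁻¹' B) = volume B)) :=
  stmt16_general T ξ hfree lam hlam hcyl
end
end
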